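/- arXiv:1806.07366 — 3 statements merged into one kernel-verified Lean document; each statement's English description precedes it below -/
import Mathlib

section
/- Let z : [t₀, t₁] → ℝ^D solve dz/dt = f(z(t), t, θ) with f continuously differentiable, and let L be a differentiable function of z(t₁). Define the adjoint a(t) = ∂L/∂z(t) (the gradient of L(z(t₁)) with respect to the state at time t, via the flow map from t to t₁). Then a satisfies the ODE da(t)/dt = -a(t)ᵀ (∂f/∂z)(z(t), t, θ). -/
/-!
By the chain rule for the flow, `DΦ_{s→t₁}(z s) = DΦ_{t→t₁}(z t) ∘ M(s)⁻¹` where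
`M(s) = DΦ_{t→s}(z t)` and `M(t) = id`, so the adjoint equation follows from the derivative of
inversion at the identity and the variational equation `M'(t) = ∂f/∂z (z t, t)`.

For the variational equation write `Y_s = Φ_{a→s}` and `F = f(·, ·, θ)`. Two trajectories starting
at `x` and `x₀` stay close (fencing and Grönwall), and strict differentiability of `F` at `(x₀, a)`
then gives `Y_s x - Y_s x₀ = (x - x₀) + (s - a) (F(x, a) - F(x₀, a)) + o(s - a) ‖x - x₀‖` as
`s ↓ a`. The error term is the increment of `x ↦ Y_s x - x - (s - a) F(x, a)`, whose derivative at
`x₀` is `DY_s(x₀) - id - (s - a) ∂ₓF(x₀, a)`, so this derivative is `o(s - a)`. Times `s < a`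
follow by reversing time.
-/

open Set Metric Filter Topology Asymptotics ContinuousLinearMap

variable {E : Type*} [NormedAddCommGroup E] [NormedSpace ℝ E]

theorem mem_ball_of_trajectory_ODE {F : E → ℝ → E} {γ : ℝ → E} {x₀ : E} {a b r C : ℝ}
    (hγ : ∀ u, HasDerivAt γ (F (γ u) u) u) (hC : 0 ≤ C)
    (hF : ∀ u ∈ Icc a b, ∀ y ∈ ball x₀ r, ‖F y u‖ ≤ C)
    (hγa : γ a ∈ ball x₀ (r / 2)) (hab : (C + 1) * (b - a) ≤ r / 2) :
    ∀ u ∈ Icc a b, γ u ∈ ball x₀ r := by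
  have hball : ∀ u ∈ Icc a b, ‖γ u - γ a‖ ≤ (C + 1) * (u - a) → γ u ∈ ball x₀ r := by
    intro u hu hle
    have hua : (C + 1) * (u - a) ≤ r / 2 :=
      (mul_le_mul_of_nonneg_left (by linarith [hu.2]) (by linarith)).trans hab
    calc dist (γ u) x₀ ≤ dist (γ u) (γ a) + dist (γ a) x₀ := dist_triangle ..
      _ < r / 2 + r / 2 := add_lt_add_of_le_of_lt (by rw [dist_eq_norm]; linarith) hγa
      _ = r := add_halves r
  have hfence : ∀ u ∈ Icc a b, ‖γ u - γ a‖ ≤ (C + 1) * (u - a) := by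
    refine image_norm_le_of_norm_deriv_right_lt_deriv_boundary' (f' := fun u => F (γ u) u)
      (B' := fun _ => C + 1) (fun u _ => ((hγ u).sub_const _).continuousAt.continuousWithinAt)
      (fun u _ => ((hγ u).sub_const _).hasDerivWithinAt) (by simp) (by fun_prop)
      (fun u _ => by
        simpa using (((hasDerivAt_id u).sub_const a).const_mul (C + 1)).hasDerivWithinAt) ?_
    intro u hu hnorm
    exact (hF u (Ico_subset_Icc_self hu) _
      (hball u (Ico_subset_Icc_self hu) hnorm.le)).trans_lt (lt_add_one C)
  exact fun u hu => hball u hu (hfence u hu)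

theorem norm_sub_le_three_mul_of_trajectories_ODE {F : E → ℝ → E} {S : Set E}
    {γ₁ γ₂ : ℝ → E} {a b K : ℝ}
    (hγ₁ : ∀ u, HasDerivAt γ₁ (F (γ₁ u) u) u) (hγ₂ : ∀ u, HasDerivAt γ₂ (F (γ₂ u) u) u)
    (hF : ∀ u ∈ Icc a b, ∀ y₁ ∈ S, ∀ y₂ ∈ S, ‖F y₁ u - F y₂ u‖ ≤ K * ‖y₁ - y₂‖)
    (hγ₁S : ∀ u ∈ Icc a b, γ₁ u ∈ S) (hγ₂S : ∀ u ∈ Icc a b, γ₂ u ∈ S)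
    (hK : 0 ≤ K) (hKab : K * (b - a) ≤ 1) :
    ∀ u ∈ Icc a b, ‖γ₁ u - γ₂ u‖ ≤ 3 * ‖γ₁ a - γ₂ a‖ := by
  intro u hu
  have hgronwall := norm_le_gronwallBound_of_norm_deriv_right_le (f := fun u => γ₁ u - γ₂ u)
    (fun v _ => ((hγ₁ v).sub (hγ₂ v)).continuousAt.continuousWithinAt)
    (fun v _ => ((hγ₁ v).sub (hγ₂ v)).hasDerivWithinAt) le_rfl
    (fun v hv => by
      rw [add_zero]
      exact hF v (Ico_subset_Icc_self hv) _ (hγ₁S v (Ico_subset_Icc_self hv)) _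
        (hγ₂S v (Ico_subset_Icc_self hv))) u hu
  have hexp : Real.exp (K * (u - a)) ≤ 3 := by
    calc Real.exp (K * (u - a)) ≤ Real.exp 1 :=
          Real.exp_le_exp.2 ((mul_le_mul_of_nonneg_left (by linarith [hu.2]) hK).trans hKab)
      _ ≤ 3 := by linarith [Real.exp_one_lt_d9]
  rw [gronwallBound_ε0] at hgronwall
  nlinarith [norm_nonneg (γ₁ a - γ₂ a)]

theorem norm_sub_sub_le_of_trajectories_ODE {F : E → ℝ → E} {S : Set E}
    {γ₁ γ₂ : ℝ → E} {a b K : ℝ}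
    (hγ₁ : ∀ u, HasDerivAt γ₁ (F (γ₁ u) u) u) (hγ₂ : ∀ u, HasDerivAt γ₂ (F (γ₂ u) u) u)
    (hF : ∀ u ∈ Icc a b, ∀ y₁ ∈ S, ∀ y₂ ∈ S, ‖F y₁ u - F y₂ u‖ ≤ K * ‖y₁ - y₂‖)
    (hγ₁S : ∀ u ∈ Icc a b, γ₁ u ∈ S) (hγ₂S : ∀ u ∈ Icc a b, γ₂ u ∈ S)
    (hK : 0 ≤ K) (hKab : K * (b - a) ≤ 1) :
    ∀ u ∈ Icc a b, ‖(γ₁ u - γ₂ u) - (γ₁ a - γ₂ a)‖ ≤ 3 * K * ‖γ₁ a - γ₂ a‖ * (u - a) := by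
  have hbound := norm_sub_le_three_mul_of_trajectories_ODE hγ₁ hγ₂ hF hγ₁S hγ₂S hK hKab
  refine norm_image_sub_le_of_norm_deriv_le_segment' (f := fun u => γ₁ u - γ₂ u)
    (fun u _ => ((hγ₁ u).sub (hγ₂ u)).hasDerivWithinAt) fun u hu => ?_
  have hu' := Ico_subset_Icc_self hu
  calc ‖F (γ₁ u) u - F (γ₂ u) u‖ ≤ K * ‖γ₁ u - γ₂ u‖ := hF u hu' _ (hγ₁S u hu') _ (hγ₂S u hu')
    _ ≤ K * (3 * ‖γ₁ a - γ₂ a‖) := mul_le_mul_of_nonneg_left (hbound u hu') hK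
    _ = 3 * K * ‖γ₁ a - γ₂ a‖ := by ring

theorem norm_sub_sub_smul_sub_le_of_trajectories_ODE {F : E → ℝ → E} {A : E →L[ℝ] E}
    {S : Set E} {γ₁ γ₂ : ℝ → E} {a b ε : ℝ}
    (hγ₁ : ∀ u, HasDerivAt γ₁ (F (γ₁ u) u) u) (hγ₂ : ∀ u, HasDerivAt γ₂ (F (γ₂ u) u) u)
    (hF : ∀ u ∈ Icc a b, ∀ y₁ ∈ S, ∀ y₂ ∈ S,
      ‖F y₁ u - F y₂ u - A (y₁ - y₂)‖ ≤ ε * ‖y₁ - y₂‖)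
    (hγ₁S : ∀ u ∈ Icc a b, γ₁ u ∈ S) (hγ₂S : ∀ u ∈ Icc a b, γ₂ u ∈ S)
    (hab : a ≤ b) (hε : 0 ≤ ε) (hK : (‖A‖ + ε) * (b - a) ≤ 1) :
    ‖(γ₁ b - γ₂ b) - (γ₁ a - γ₂ a) - (b - a) • (F (γ₁ a) a - F (γ₂ a) a)‖
      ≤ (4 * ε + 3 * ‖A‖ * (‖A‖ + ε) * (b - a)) * (b - a) * ‖γ₁ a - γ₂ a‖ := by
  set K := ‖A‖ + ε
  set e : ℝ → E := fun u => γ₁ u - γ₂ u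
  set v : ℝ → E := fun u => F (γ₁ u) u - F (γ₂ u) u
  have hlin : ∀ u ∈ Icc a b, ‖v u - A (e u)‖ ≤ ε * ‖e u‖ :=
    fun u hu => hF u hu _ (hγ₁S u hu) _ (hγ₂S u hu)
  have hlip : ∀ u ∈ Icc a b, ∀ y₁ ∈ S, ∀ y₂ ∈ S, ‖F y₁ u - F y₂ u‖ ≤ K * ‖y₁ - y₂‖ := by
    intro u hu y₁ hy₁ y₂ hy₂
    calc ‖F y₁ u - F y₂ u‖ ≤ ‖A (y₁ - y₂)‖ + ‖F y₁ u - F y₂ u - A (y₁ - y₂)‖ :=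
          norm_le_insert' _ _
      _ ≤ ‖A‖ * ‖y₁ - y₂‖ + ε * ‖y₁ - y₂‖ :=
          add_le_add (A.le_opNorm _) (hF u hu y₁ hy₁ y₂ hy₂)
      _ = K * ‖y₁ - y₂‖ := by ring
  have hK0 : 0 ≤ K := by positivity
  have hbound := norm_sub_le_three_mul_of_trajectories_ODE hγ₁ hγ₂ hlip hγ₁S hγ₂S hK0 hK
  have hdrift := norm_sub_sub_le_of_trajectories_ODE hγ₁ hγ₂ hlip hγ₁S hγ₂S hK0 hK
  have hderiv : ∀ u, HasDerivAt (fun u => e u - e a - (u - a) • v a) (v u - v a) u := fun u => by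
    simpa using (((hγ₁ u).sub (hγ₂ u)).sub_const (e a)).fun_sub
      (((hasDerivAt_id u).sub_const a).smul_const (v a))
  have hfinal := norm_image_sub_le_of_norm_deriv_le_segment'
    (C := (4 * ε + 3 * ‖A‖ * K * (b - a)) * ‖e a‖) (fun u _ => (hderiv u).hasDerivWithinAt)
    (fun u hu => ?_) b (right_mem_Icc.2 hab)
  · rw [sub_self, sub_self, zero_smul, sub_zero, sub_zero] at hfinal
    exact hfinal.trans_eq (by ring)
  have hu' := Ico_subset_Icc_self hu
  calc ‖v u - v a‖ = ‖(v u - A (e u)) - (v a - A (e a)) + A (e u - e a)‖ := by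
        rw [map_sub A (e u) (e a)]; congr 1; abel
    _ ≤ ‖v u - A (e u)‖ + ‖v a - A (e a)‖ + ‖A (e u - e a)‖ :=
        (norm_add_le _ _).trans (add_le_add_left (norm_sub_le _ _) _)
    _ ≤ ε * (3 * ‖e a‖) + ε * ‖e a‖ + ‖A‖ * (3 * K * ‖e a‖ * (b - a)) := by
        gcongr
        · exact (hlin u hu').trans (mul_le_mul_of_nonneg_left (hbound u hu') hε)
        · exact hlin a (left_mem_Icc.2 hab)
        · refine (A.le_opNorm _).trans (mul_le_mul_of_nonneg_left ?_ (norm_nonneg A))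
          exact (hdrift u hu').trans (by gcongr; exact hu.2.le)
    _ = (4 * ε + 3 * ‖A‖ * K * (b - a)) * ‖e a‖ := by ring

theorem HasStrictFDerivAt.exists_ball_norm_sub_sub_le {F : E → ℝ → E} {F' : E × ℝ →L[ℝ] E}
    {x₀ : E} {a ε : ℝ} (hF : HasStrictFDerivAt (fun q : E × ℝ => F q.1 q.2) F' (x₀, a))
    (hε : 0 < ε) :
    ∃ r > 0, ∀ u ∈ ball a r, ∀ y₁ ∈ ball x₀ r, ∀ y₂ ∈ ball x₀ r,
      ‖F y₁ u - F y₂ u - F'.comp (inl ℝ E ℝ) (y₁ - y₂)‖ ≤ ε * ‖y₁ - y₂‖ := by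
  obtain ⟨r, hr, h⟩ := Metric.eventually_nhds_iff_ball.1 (hF.isLittleO.def hε)
  refine ⟨r, hr, fun u hu y₁ hy₁ y₂ hy₂ => ?_⟩
  have hmem : ((y₁, u), (y₂, u)) ∈ ball ((x₀, a), (x₀, a)) r := by
    simp only [← ball_prod_same, mem_prod]
    exact ⟨⟨hy₁, hu⟩, hy₂, hu⟩
  simpa [Prod.norm_def] using h _ hmem

theorem exists_pos_norm_flow_sub_sub_smul_sub_le {F : E → ℝ → E} {F' : E × ℝ →L[ℝ] E}
    {Y : ℝ → E → E} {x₀ : E} {a c : ℝ}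
    (hF : HasStrictFDerivAt (fun q : E × ℝ => F q.1 q.2) F' (x₀, a))
    (hY_init : ∀ x, Y a x = x) (hY_ode : ∀ x u, HasDerivAt (fun v => Y v x) (F (Y u x) u) u)
    (hc : 0 < c) :
    ∃ ρ > 0, ∃ r > 0, ∀ s ∈ Ico a (a + ρ), ∀ x ∈ ball x₀ r,
      ‖Y s x - Y s x₀ - (x - x₀) - (s - a) • (F x a - F x₀ a)‖ ≤ c * (s - a) * ‖x - x₀‖ := by
  set A := F'.comp (inl ℝ E ℝ)
  obtain ⟨r₁, hr₁, hlin⟩ := hF.exists_ball_norm_sub_sub_le (ε := c / 8) (by positivity)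
  set C := ‖F x₀ a‖ + 1
  obtain ⟨r₂, hr₂, hFC⟩ := Metric.eventually_nhds_iff_ball.1
    (hF.continuousAt.norm.eventually_lt continuousAt_const (lt_add_one ‖F x₀ a‖))
  set r := min r₁ r₂
  have hr : 0 < r := lt_min hr₁ hr₂
  set K := ‖A‖ + c / 8
  have hsmall : ∀ κ > (0 : ℝ), ∀ m : ℝ, ∀ᶠ ρ in 𝓝 (0 : ℝ), m * ρ < κ := fun κ hκ m =>
    (continuous_const.mul continuous_id).continuousAt.eventually_lt continuousAt_const
      (by simpa using hκ)
  -- `ρ` keeps both trajectories in `ball x₀ r` and makes `4 (c / 8) + 3 ‖A‖ K ρ` at most `c`.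
  obtain ⟨ρ, ⟨hρr, hρK, hρA⟩, hρ⟩ := ((((hsmall _ (half_pos hr) (C + 1)).and
    ((hsmall _ one_pos K).and (hsmall _ (half_pos hc) (3 * ‖A‖ * K)))).filter_mono
    nhdsWithin_le_nhds).and (self_mem_nhdsWithin (s := Ioi 0))).exists
  refine ⟨ρ, hρ, r / 2, half_pos hr, fun s hs x hx => ?_⟩
  have hsρ : ∀ m, 0 ≤ m → m * (s - a) ≤ m * ρ := fun m hm =>
    mul_le_mul_of_nonneg_left (by linarith [hs.2]) hm
  have hsub : Icc a s ⊆ ball a r := fun u hu => by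
    rw [mem_ball, Real.dist_eq, abs_lt]
    constructor <;> nlinarith [hu.1, hu.2, hs.2, norm_nonneg (F x₀ a)]
  have hbound : ∀ u ∈ Icc a s, ∀ y ∈ ball x₀ r, ‖F y u‖ ≤ C := fun u hu y hy => by
    refine (hFC (y, u) ?_).le
    rw [← ball_prod_same]
    exact ⟨ball_subset_ball (min_le_right _ _) hy, ball_subset_ball (min_le_right _ _) (hsub hu)⟩
  have hmem : ∀ y ∈ ball x₀ (r / 2), ∀ u ∈ Icc a s, Y u y ∈ ball x₀ r := fun y hy =>
    mem_ball_of_trajectory_ODE (hY_ode y) (by positivity) hbound (by rwa [hY_init])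
      (by nlinarith [hs.2, norm_nonneg (F x₀ a)])
  have key := norm_sub_sub_smul_sub_le_of_trajectories_ODE (hY_ode x) (hY_ode x₀)
    (fun u hu y₁ hy₁ y₂ hy₂ => hlin u (ball_subset_ball (min_le_left _ _) (hsub hu)) y₁
      (ball_subset_ball (min_le_left _ _) hy₁) y₂ (ball_subset_ball (min_le_left _ _) hy₂))
    (hmem x hx) (hmem x₀ (mem_ball_self (half_pos hr))) hs.1 (by positivity)
    ((hsρ K (by positivity)).trans hρK.le)
  simp only [hY_init] at key
  have hfactor : 4 * (c / 8) + 3 * ‖A‖ * K * (s - a) ≤ c := by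
    linarith [hsρ (3 * ‖A‖ * K) (by positivity)]
  exact key.trans (mul_le_mul_of_nonneg_right
    (mul_le_mul_of_nonneg_right hfactor (by linarith [hs.1])) (norm_nonneg _))

theorem hasDerivWithinAt_fderiv_flow_Ici {F : E → ℝ → E} {F' : E × ℝ →L[ℝ] E}
    {Y : ℝ → E → E} {x₀ : E} {a : ℝ}
    (hF : HasStrictFDerivAt (fun q : E × ℝ => F q.1 q.2) F' (x₀, a))
    (hY_init : ∀ x, Y a x = x) (hY_ode : ∀ x u, HasDerivAt (fun v => Y v x) (F (Y u x) u) u)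
    (hY_diff : ∀ u, DifferentiableAt ℝ (Y u) x₀) :
    HasDerivWithinAt (fun u => fderiv ℝ (Y u) x₀) (F'.comp (inl ℝ E ℝ)) (Ici a) a := by
  have hA : HasFDerivAt (fun x => F x a) (F'.comp (inl ℝ E ℝ)) x₀ :=
    hF.hasFDerivAt.comp (f := fun x => (x, a)) x₀ (hasFDerivAt_prodMk_left (𝕜 := ℝ) x₀ a)
  have hYa : fderiv ℝ (Y a) x₀ = ContinuousLinearMap.id ℝ E := by
    rw [show Y a = id from funext hY_init, fderiv_id]
  rw [hasDerivWithinAt_iff_isLittleO, isLittleO_iff]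
  intro c hc
  obtain ⟨ρ, hρ, r, hr, hest⟩ := exists_pos_norm_flow_sub_sub_smul_sub_le hF hY_init hY_ode hc
  filter_upwards [Ico_mem_nhdsGE (lt_add_of_pos_right a hρ)] with s hs
  have hsa : 0 ≤ s - a := sub_nonneg.2 hs.1
  rw [hYa, Real.norm_of_nonneg hsa]
  have hg : HasFDerivAt (fun x => Y s x - x - (s - a) • F x a)
      (fderiv ℝ (Y s) x₀ - ContinuousLinearMap.id ℝ E - (s - a) • F'.comp (inl ℝ E ℝ)) x₀ :=
    ((hY_diff s).hasFDerivAt.sub (hasFDerivAt_id x₀)).sub (hA.const_smul (s - a))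
  refine hg.le_of_lip' (by positivity) ?_
  filter_upwards [ball_mem_nhds x₀ hr] with x hx
  calc ‖Y s x - x - (s - a) • F x a - (Y s x₀ - x₀ - (s - a) • F x₀ a)‖
      = ‖Y s x - Y s x₀ - (x - x₀) - (s - a) • (F x a - F x₀ a)‖ := by
        rw [smul_sub]; congr 1; abel
    _ ≤ c * (s - a) * ‖x - x₀‖ := hest s hs x hx

theorem hasDerivAt_fderiv_flow {F : E → ℝ → E} {F' : E × ℝ →L[ℝ] E}
    {Y : ℝ → E → E} {x₀ : E} {a : ℝ}
    (hF : HasStrictFDerivAt (fun q : E × ℝ => F q.1 q.2) F' (x₀, a))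
    (hY_init : ∀ x, Y a x = x) (hY_ode : ∀ x u, HasDerivAt (fun v => Y v x) (F (Y u x) u) u)
    (hY_diff : ∀ u, DifferentiableAt ℝ (Y u) x₀) :
    HasDerivAt (fun u => fderiv ℝ (Y u) x₀) (F'.comp (inl ℝ E ℝ)) a := by
  have hrev : ∀ u, HasDerivAt (fun u : ℝ => 2 * a - u) (-1) u := fun u => by
    simpa using (hasDerivAt_id u).const_sub (2 * a)
  have hF_rev : HasStrictFDerivAt (fun q : E × ℝ => -F q.1 (2 * a - q.2))
      (-F'.comp ((fst ℝ E ℝ).prod (-snd ℝ E ℝ))) (x₀, a) := by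
    have hF' : HasStrictFDerivAt (fun q : E × ℝ => F q.1 q.2) F' (x₀, 2 * a - a) := by
      rwa [show 2 * a - a = a by ring]
    have hreflect : HasStrictFDerivAt (fun q : E × ℝ => (q.1, 2 * a - q.2))
        ((fst ℝ E ℝ).prod (-snd ℝ E ℝ)) (x₀, a) :=
      hasStrictFDerivAt_fst.prodMk (hasStrictFDerivAt_snd.const_sub (2 * a))
    exact (hF'.comp (x₀, a) hreflect).neg
  have hleft := hasDerivWithinAt_fderiv_flow_Ici (F := fun y u => -F y (2 * a - u)) (a := a)
    (Y := fun u => Y (2 * a - u)) hF_rev (fun x => by simpa [two_mul] using hY_init x)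
    (fun x u => by simpa [Function.comp_def] using (hY_ode x _).scomp u (hrev u))
    (fun u => hY_diff _)
  have hleft' := hleft.scomp_of_eq a (hrev a).hasDerivWithinAt (s := Iic a)
    (fun u hu => by simp only [mem_Ici]; linarith [mem_Iic.1 hu]) (by ring)
  have hright := hasDerivWithinAt_fderiv_flow_Ici hF hY_init hY_ode hY_diff
  rw [← hasDerivWithinAt_univ, ← Iic_union_Ici (a := a)]
  refine HasDerivWithinAt.union ?_ hright
  convert hleft' using 1
  · funext u; simp
  · ext x; simp

theorem HasDerivAt.ringInverse {R : Type*} [NormedRing R] [NormedAlgebra ℝ R]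
    [HasSummableGeomSeries R] {M : ℝ → R} {A : R} {t : ℝ} (hM : HasDerivAt M A t) (u : Rˣ)
    (hu : M t = u) : HasDerivAt (fun s => Ring.inverse (M s)) (-(↑u⁻¹ * A * ↑u⁻¹)) t := by
  have hinv := hasFDerivAt_ringInverse (𝕜 := ℝ) u
  rw [← hu] at hinv
  have h := hinv.comp_hasDerivAt t hM
  simp only [neg_apply, mulLeftRight_apply] at h
  exact h

section Flow

variable {Φ : ℝ → ℝ → E → E}

theorem fderiv_flow_comp (hΦ_diff : ∀ s t, Differentiable ℝ (Φ s t))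
    (hΦ_comp : ∀ r s t x, Φ s t (Φ r s x) = Φ r t x) (r s t : ℝ) (x : E) :
    fderiv ℝ (Φ r t) x = (fderiv ℝ (Φ s t) (Φ r s x)).comp (fderiv ℝ (Φ r s) x) := by
  rw [← fderiv_comp x (hΦ_diff s t _) (hΦ_diff r s x)]
  exact congrArg (fderiv ℝ · x) (funext fun y => (hΦ_comp r s t y).symm)

theorem fderiv_flow_self (hΦ_init : ∀ s x, Φ s s x = x) (s : ℝ) (x : E) :
    fderiv ℝ (Φ s s) x = ContinuousLinearMap.id ℝ E := by
  rw [show Φ s s = id from funext (hΦ_init s), fderiv_id]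

theorem fderiv_flow_eq_ringInverse (hΦ_init : ∀ s x, Φ s s x = x)
    (hΦ_diff : ∀ s t, Differentiable ℝ (Φ s t)) (hΦ_comp : ∀ r s t x, Φ s t (Φ r s x) = Φ r t x)
    {z : ℝ → E} (hz_flow : ∀ s t, Φ s t (z s) = z t) (s t : ℝ) :
    fderiv ℝ (Φ s t) (z s) = Ring.inverse (fderiv ℝ (Φ t s) (z t)) := by
  have h₁ := fderiv_flow_comp hΦ_diff hΦ_comp t s t (z t)
  have h₂ := fderiv_flow_comp hΦ_diff hΦ_comp s t s (z s)
  rw [fderiv_flow_self hΦ_init, hz_flow] at h₁ h₂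
  exact (Ring.inverse_unit ⟨_, _, h₂.symm, h₁.symm⟩).symm

end Flow

theorem adjoint_ode_general
    {D P : ℕ} (f : (Fin D → ℝ) → ℝ → (Fin P → ℝ) → (Fin D → ℝ)) (θ : Fin P → ℝ)
    (hf : ContDiff ℝ 1 (fun q : (Fin D → ℝ) × ℝ => f q.1 q.2 θ))
    (Φ : ℝ → ℝ → (Fin D → ℝ) → (Fin D → ℝ))
    (hΦ_init : ∀ s x, Φ s s x = x)
    (hΦ_ode : ∀ s x t, HasDerivAt (fun u => Φ s u x) (f (Φ s t x) t θ) t)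
    (hΦ_diff : ∀ s t, Differentiable ℝ (Φ s t))
    (hΦ_comp : ∀ r s t x, Φ s t (Φ r s x) = Φ r t x)
    (z : ℝ → (Fin D → ℝ))
    (hz_flow : ∀ s t, Φ s t (z s) = z t)
    (t₁ : ℝ) (L : (Fin D → ℝ) → ℝ)
    (t : ℝ) :
    HasDerivAt (fun s => ((fderiv ℝ L (z t₁)).comp (fderiv ℝ (Φ s t₁) (z s))))
      (-(((fderiv ℝ L (z t₁)).comp (fderiv ℝ (Φ t t₁) (z t))).comp
          (fderiv ℝ (fun x => f x t θ) (z t)))) t := by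
  have hM : HasDerivAt (fun s => fderiv ℝ (Φ t s) (z t))
      (fderiv ℝ (fun x => f x t θ) (z t)) t := by
    have hf' := hf.hasStrictFDerivAt (x := (z t, t)) one_ne_zero
    convert hasDerivAt_fderiv_flow (F := fun x u => f x u θ) hf' (hΦ_init t) (hΦ_ode t)
      (fun u => hΦ_diff t u _) using 1
    exact (hf'.hasFDerivAt.comp (f := fun x => (x, t)) (z t)
      (hasFDerivAt_prodMk_left (𝕜 := ℝ) (z t) t)).fderiv
  have hB : HasDerivAt (fun s => fderiv ℝ (Φ s t) (z s))
      (-fderiv ℝ (fun x => f x t θ) (z t)) t := by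
    simp_rw [fderiv_flow_eq_ringInverse hΦ_init hΦ_diff hΦ_comp hz_flow _ t]
    simpa using hM.ringInverse 1 (fderiv_flow_self hΦ_init t (z t))
  have hchain : ∀ s, (fderiv ℝ L (z t₁)).comp (fderiv ℝ (Φ s t₁) (z s)) =
      ((fderiv ℝ L (z t₁)).comp (fderiv ℝ (Φ t t₁) (z t))).comp (fderiv ℝ (Φ s t) (z s)) :=
    fun s => by rw [fderiv_flow_comp hΦ_diff hΦ_comp s t t₁, hz_flow, comp_assoc]
  have hcomp := (hasDerivAt_const t
    ((fderiv ℝ L (z t₁)).comp (fderiv ℝ (Φ t t₁) (z t)))).clm_comp hB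
  rw [zero_comp, zero_add, comp_neg] at hcomp
  exact hcomp.congr_of_eventuallyEq (Eventually.of_forall hchain)

/-- Adjoint sensitivity: let `Φ s t` be the flow maps of `dz/dt = f(z,t,θ)` and let
`z` be a trajectory. Define the adjoint `a(t) = ∇L(z(t₁))ᵀ ∘ DΦ_{t→t₁}(z(t))`.
Then `a` satisfies `da/dt = -a(t)ᵀ ∂f/∂z (z(t), t, θ)`. -/
theorem adjoint_ode
    {D P : ℕ} (f : (Fin D → ℝ) → ℝ → (Fin P → ℝ) → (Fin D → ℝ)) (θ : Fin P → ℝ)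
    (hf : ContDiff ℝ 1 (fun q : (Fin D → ℝ) × ℝ => f q.1 q.2 θ))
    (Φ : ℝ → ℝ → (Fin D → ℝ) → (Fin D → ℝ))
    (hΦ_init : ∀ s x, Φ s s x = x)
    (hΦ_ode : ∀ s x t, HasDerivAt (fun u => Φ s u x) (f (Φ s t x) t θ) t)
    (hΦ_diff : ∀ s t, Differentiable ℝ (Φ s t))
    (hΦ_comp : ∀ r s t x, Φ s t (Φ r s x) = Φ r t x)
    (z : ℝ → (Fin D → ℝ))
    (hz : ∀ t, HasDerivAt z (f (z t) t θ) t)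
    (hz_flow : ∀ s t, Φ s t (z s) = z t)
    (t₁ : ℝ) (L : (Fin D → ℝ) → ℝ) (hL : DifferentiableAt ℝ L (z t₁))
    (t : ℝ) :
    HasDerivAt (fun s => ((fderiv ℝ L (z t₁)).comp (fderiv ℝ (Φ s t₁) (z s))))
      (-(((fderiv ℝ L (z t₁)).comp (fderiv ℝ (Φ t t₁) (z t))).comp
          (fderiv ℝ (fun x => f x t θ) (z t)))) t :=
  adjoint_ode_general f θ hf Φ hΦ_init hΦ_ode hΦ_diff hΦ_comp z hz_flow t₁ L t
end

section
/- Consider the augmented state (z, θ, t) evolving under d/dt (z, θ, t) = (f(z, θ, t), 0, 1). Then the adjoint dynamics of the augmented system give da_θ/dt = -a(t)ᵀ ∂f/∂θ and da_t/dt = -a(t)ᵀ ∂f/∂t, where a is the adjoint of z. -/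
/-!
The augmented field `q ↦ (F q, 0, 1)` has Jacobian `(DF) × 0`: its last two components are
constant. Hence `-Aᵀ J_aug = -(A ∘ inl) ∘ DF`, so every component of `A` is driven only by the
`z`-component `a = A ∘ inl`. Restricting `DF` to the `θ`- and `t`-directions gives the partial
derivatives `∂f/∂θ` and `∂f/∂t`.
-/

open ContinuousLinearMap

section

variable {𝕜 : Type*} [NontriviallyNormedField 𝕜]
  {E X Y T G V : Type*}
  [NormedAddCommGroup E] [NormedSpace 𝕜 E] [NormedAddCommGroup X] [NormedSpace 𝕜 X]
  [NormedAddCommGroup Y] [NormedSpace 𝕜 Y] [NormedAddCommGroup T] [NormedSpace 𝕜 T]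
  [NormedAddCommGroup G] [NormedSpace 𝕜 G] [NormedAddCommGroup V] [NormedSpace 𝕜 V]

theorem DifferentiableAt.fderiv_prodMk_const {F : E → X} {q : E}
    (hF : DifferentiableAt 𝕜 F q) (c : Y) :
    fderiv 𝕜 (fun p => (F p, c)) q = (fderiv 𝕜 F q).prod 0 := by
  rw [hF.fderiv_prodMk (differentiableAt_const c), fderiv_const_apply]

theorem ContinuousLinearMap.comp_prod_zero (L : X × Y →L[𝕜] G) (M : E →L[𝕜] X) :
    L.comp (M.prod 0) = (L.comp (inl 𝕜 X Y)).comp M := by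
  ext v; simp

theorem HasDerivAt.comp_of_hasDerivAt_neg_comp_prod_zero {A : 𝕜 → (X × Y →L[𝕜] G)}
    {M : X × Y →L[𝕜] X} {t : 𝕜} (hA : HasDerivAt A (-(A t).comp (M.prod 0)) t)
    (B : V →L[𝕜] X × Y) :
    HasDerivAt (fun s => (A s).comp B) (-((A t).comp (inl 𝕜 X Y)).comp (M.comp B)) t := by
  simpa [comp_prod_zero, comp_assoc] using hA.clm_comp (hasDerivAt_const t B)

theorem HasDerivAt.apply_of_hasDerivAt_neg_comp_prod_zero {A : 𝕜 → (X × Y →L[𝕜] G)}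
    {M : X × Y →L[𝕜] X} {t : 𝕜} (hA : HasDerivAt A (-(A t).comp (M.prod 0)) t)
    (v : X × Y) :
    HasDerivAt (fun s => A s v) (-((A t).comp (inl 𝕜 X Y)) (M v)) t := by
  simpa [comp_prod_zero] using hA.clm_apply (hasDerivAt_const t v)

theorem HasFDerivAt.comp_prodMk_mid {F : X × Y × T → G} {DF : X × Y × T →L[𝕜] G}
    {x : X} {y : Y} {r : T} (hF : HasFDerivAt F DF (x, y, r)) :
    HasFDerivAt (fun w => F (x, w, r)) (DF.comp ((inr 𝕜 X (Y × T)).comp (inl 𝕜 Y T))) y :=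
  hF.comp y ((hasFDerivAt_prodMk_right x (y, r)).comp y (hasFDerivAt_prodMk_left y r))

theorem HasFDerivAt.hasDerivAt_comp_prodMk_last {F : X × Y × 𝕜 → G}
    {DF : X × Y × 𝕜 →L[𝕜] G} {x : X} {y : Y} {r : 𝕜} (hF : HasFDerivAt F DF (x, y, r)) :
    HasDerivAt (fun s => F (x, y, s)) (DF (0, 0, 1)) r :=
  hF.comp_hasDerivAt r
    ((hasDerivAt_const r x).prodMk ((hasDerivAt_const r y).prodMk (hasDerivAt_id r)))

end

theorem augmented_adjoint_dynamics_general
    {D P : ℕ} (f : (Fin D → ℝ) → (Fin P → ℝ) → ℝ → (Fin D → ℝ))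
    (hf : ContDiff ℝ 1 (fun q : (Fin D → ℝ) × (Fin P → ℝ) × ℝ => f q.1 q.2.1 q.2.2))
    (θ : Fin P → ℝ) (z : ℝ → (Fin D → ℝ))
    (A : ℝ → (((Fin D → ℝ) × (Fin P → ℝ) × ℝ) →L[ℝ] ℝ))
    (hA : ∀ t, HasDerivAt A
      (-(A t).comp (fderiv ℝ
        (fun q : (Fin D → ℝ) × (Fin P → ℝ) × ℝ =>
          ((f q.1 q.2.1 q.2.2, (0 : Fin P → ℝ), (1 : ℝ)) :
            (Fin D → ℝ) × (Fin P → ℝ) × ℝ)) (z t, θ, t))) t)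
    (t : ℝ) :
    HasDerivAt
      (fun s => (A s).comp
        ((ContinuousLinearMap.inr ℝ (Fin D → ℝ) ((Fin P → ℝ) × ℝ)).comp
          (ContinuousLinearMap.inl ℝ (Fin P → ℝ) ℝ)))
      (-(((A t).comp (ContinuousLinearMap.inl ℝ (Fin D → ℝ) ((Fin P → ℝ) × ℝ))).comp
          (fderiv ℝ (fun w => f (z t) w t) θ)) : (Fin P → ℝ) →L[ℝ] ℝ) t
    ∧
    HasDerivAt (fun s => (A s) ((0 : Fin D → ℝ), (0 : Fin P → ℝ), (1 : ℝ)))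
      (-(((A t).comp (ContinuousLinearMap.inl ℝ (Fin D → ℝ) ((Fin P → ℝ) × ℝ)))
          (deriv (fun s => f (z t) θ s) t))) t := by
  have hF : HasFDerivAt (fun q : (Fin D → ℝ) × (Fin P → ℝ) × ℝ => f q.1 q.2.1 q.2.2)
      (fderiv ℝ (fun q => f q.1 q.2.1 q.2.2) (z t, θ, t)) (z t, θ, t) :=
    (hf.differentiable one_ne_zero _).hasFDerivAt
  have hAt := hA t
  rw [hF.differentiableAt.fderiv_prodMk_const] at hAt
  rw [hF.comp_prodMk_mid.fderiv, hF.hasDerivAt_comp_prodMk_last.deriv]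
  exact ⟨hAt.comp_of_hasDerivAt_neg_comp_prod_zero _,
    hAt.apply_of_hasDerivAt_neg_comp_prod_zero _⟩

/-- Augmented adjoint dynamics: for the augmented state `(z, θ, t)` evolving under
`(f(z,θ,t), 0, 1)`, if `A` is the augmented adjoint (satisfying
`dA/dt = -Aᵀ J_aug`), then its `θ`-component satisfies `da_θ/dt = -aᵀ ∂f/∂θ`
and its `t`-component satisfies `da_t/dt = -aᵀ ∂f/∂t`, where `a` is the
`z`-component of `A`. -/
theorem augmented_adjoint_dynamics
    {D P : ℕ} (f : (Fin D → ℝ) → (Fin P → ℝ) → ℝ → (Fin D → ℝ))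
    (hf : ContDiff ℝ 1 (fun q : (Fin D → ℝ) × (Fin P → ℝ) × ℝ => f q.1 q.2.1 q.2.2))
    (θ : Fin P → ℝ) (z : ℝ → (Fin D → ℝ))
    (hz : ∀ t, HasDerivAt z (f (z t) θ t) t)
    (A : ℝ → (((Fin D → ℝ) × (Fin P → ℝ) × ℝ) →L[ℝ] ℝ))
    (hA : ∀ t, HasDerivAt A
      (-(A t).comp (fderiv ℝ
        (fun q : (Fin D → ℝ) × (Fin P → ℝ) × ℝ =>
          ((f q.1 q.2.1 q.2.2, (0 : Fin P → ℝ), (1 : ℝ)) :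
            (Fin D → ℝ) × (Fin P → ℝ) × ℝ)) (z t, θ, t))) t)
    (t : ℝ) :
    HasDerivAt
      (fun s => (A s).comp
        ((ContinuousLinearMap.inr ℝ (Fin D → ℝ) ((Fin P → ℝ) × ℝ)).comp
          (ContinuousLinearMap.inl ℝ (Fin P → ℝ) ℝ)))
      (-(((A t).comp (ContinuousLinearMap.inl ℝ (Fin D → ℝ) ((Fin P → ℝ) × ℝ))).comp
          (fderiv ℝ (fun w => f (z t) w t) θ)) : (Fin P → ℝ) →L[ℝ] ℝ) t
    ∧
    HasDerivAt (fun s => (A s) ((0 : Fin D → ℝ), (0 : Fin P → ℝ), (1 : ℝ)))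
      (-(((A t).comp (ContinuousLinearMap.inl ℝ (Fin D → ℝ) ((Fin P → ℝ) × ℝ)))
          (deriv (fun s => f (z t) θ s) t))) t :=
  augmented_adjoint_dynamics_general f hf θ z A hA t
end

section
/- Under the hypotheses of the previous statement, if p(z(t), t) > 0 along a trajectory, then d/dt [log p(z(t), t)] = -Σᵢ (∂fᵢ/∂zᵢ)(z(t), t), i.e., the Liouville equation with zero diffusion implies the instantaneous change of variables formula. -/
/-!
Along a characteristic `s ↦ (z s, s)` the chain rule gives
`d/ds p(z, s) = ∇ₓp · f + ∂ₜp`, and the Liouville equation together with the product rule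
`div (p f) = p div f + ∇ₓp · f` turns this into `d/ds p(z, s) = -p div f`.
Dividing by `p > 0` gives the derivative of `log p`.
-/

noncomputable def divergence {D : ℕ} (g : (Fin D → ℝ) → Fin D → ℝ) (x : Fin D → ℝ) : ℝ :=
  ∑ i, fderiv ℝ g x (Pi.single i 1) i

theorem divergence_eq_sum_fderiv_coord {D : ℕ} {g : (Fin D → ℝ) → Fin D → ℝ}
    {x : Fin D → ℝ} (hg : DifferentiableAt ℝ g x) :
    divergence g x = ∑ i, fderiv ℝ (fun y => g y i) x (Pi.single i 1) := by
  simp only [divergence, fderiv_apply hg, ContinuousLinearMap.comp_apply,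
    ContinuousLinearMap.proj_apply]

theorem divergence_smul {D : ℕ} {φ : (Fin D → ℝ) → ℝ} {g : (Fin D → ℝ) → Fin D → ℝ}
    {x : Fin D → ℝ} (hφ : DifferentiableAt ℝ φ x) (hg : DifferentiableAt ℝ g x) :
    divergence (fun y => φ y • g y) x = φ x * divergence g x + fderiv ℝ φ x (g x) := by
  have hexpand : fderiv ℝ φ x (g x) = ∑ i, g x i * fderiv ℝ φ x (Pi.single i 1) := by
    conv_lhs => rw [← Finset.univ_sum_single (g x), map_sum]
    refine Finset.sum_congr rfl fun i _ => ?_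
    rw [← smul_eq_mul, ← map_smul, ← Pi.single_smul', smul_eq_mul, mul_one]
  simp only [divergence, fderiv_fun_smul hφ hg, hexpand, Finset.mul_sum, ← Finset.sum_add_distrib]
  refine Finset.sum_congr rfl fun i _ => ?_
  simp only [_root_.add_apply, _root_.smul_apply,
    ContinuousLinearMap.smulRight_apply, Pi.add_apply, Pi.smul_apply, smul_eq_mul]
  ring

theorem hasDerivAt_along_curve {E : Type*} [NormedAddCommGroup E] [NormedSpace ℝ E]
    {p : E → ℝ → ℝ} {z : ℝ → E} {v : E} {a t : ℝ}
    (hp : DifferentiableAt ℝ (fun q : E × ℝ => p q.1 q.2) (z t, t))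
    (hz : HasDerivAt z v t) (hpt : HasDerivAt (fun s => p (z t) s) a t) :
    HasDerivAt (fun s => p (z s) s) (fderiv ℝ (fun y => p y t) (z t) v + a) t := by
  set L := fderiv ℝ (fun q : E × ℝ => p q.1 q.2) (z t, t)
  have hL : HasFDerivAt (fun q : E × ℝ => p q.1 q.2) L (z t, t) := hp.hasFDerivAt
  have hpx : HasFDerivAt (fun y => p y t) (L.comp (ContinuousLinearMap.inl ℝ E ℝ)) (z t) :=
    hL.comp (g := fun q : E × ℝ => p q.1 q.2) (z t) (hasFDerivAt_prodMk_left (𝕜 := ℝ) (z t) t)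
  have hpt' : HasDerivAt (fun s => p (z t) s) (L (0, 1)) t :=
    hL.comp_hasDerivAt_of_eq t ((hasDerivAt_const t (z t)).prodMk (hasDerivAt_id t)) rfl
  have htotal : HasDerivAt (fun s => p (z s) s) (L (v, 1)) t :=
    hL.comp_hasDerivAt_of_eq t (hz.prodMk (hasDerivAt_id t)) rfl
  convert htotal using 1
  rw [hpx.fderiv, hpt.unique hpt', ContinuousLinearMap.comp_apply, ← map_add]
  simp

/-- Under the Liouville equation, if `p(z(t), t) > 0` along a trajectory, then
`d/dt log p(z(t), t) = -Σᵢ ∂fᵢ/∂zᵢ (z(t), t)`. -/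
theorem liouville_log_derivative
    {D : ℕ} (f : (Fin D → ℝ) → ℝ → (Fin D → ℝ))
    (hf : ∀ t, Differentiable ℝ (fun x => f x t))
    (z : ℝ → (Fin D → ℝ))
    (hz : ∀ t, HasDerivAt z (f (z t) t) t)
    (p : (Fin D → ℝ) → ℝ → ℝ)
    (hp : ContDiff ℝ 1 (fun q : (Fin D → ℝ) × ℝ => p q.1 q.2))
    (hp_pos : ∀ t, 0 < p (z t) t)
    (hLiouville : ∀ x t,
      HasDerivAt (fun s => p x s)
        (-∑ i, fderiv ℝ (fun y => f y t i * p y t) x (Pi.single i 1)) t)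
    (t : ℝ) :
    HasDerivAt (fun s => Real.log (p (z s) s))
      (-∑ i, fderiv ℝ (fun y => f y t) (z t) (Pi.single i 1) i) t := by
  have hpt : Differentiable ℝ (fun y => p y t) :=
    (hp.comp (contDiff_id.prodMk contDiff_const)).differentiable one_ne_zero
  have hdiv : ∑ i, fderiv ℝ (fun y => f y t i * p y t) (z t) (Pi.single i 1)
      = divergence (fun y => p y t • f y t) (z t) := by
    rw [divergence_eq_sum_fderiv_coord ((hpt _).fun_smul (hf t _))]
    simp only [Pi.smul_apply, smul_eq_mul, mul_comm]
  have hmaterial : HasDerivAt (fun s => p (z s) s)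
      (-(p (z t) t * divergence (fun y => f y t) (z t))) t := by
    convert hasDerivAt_along_curve ((hp.differentiable one_ne_zero) _) (hz t)
      (hdiv ▸ hLiouville (z t) t) using 1
    rw [divergence_smul (hpt _) (hf t _)]
    ring
  convert hmaterial.log (hp_pos t).ne' using 1
  rw [neg_div, mul_div_cancel_left₀ _ (hp_pos t).ne', divergence]
end
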